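/- arXiv:2602.08055 — 3 statements merged into one kernel-verified Lean document; each statement's English description precedes it below -/
import Mathlib

section
/- Let m > 0 and write ⟨ξ⟩ := (1 + ξ²)^{1/2}. There exists a constant C > 0 (depending only on m) such that for all real ξ₁, ξ₂ with ⟨ξ₁⟩ ≤ ⟨ξ₂⟩/20 one has |1/Δ(ξ₁,ξ₂) + (1/(4m))ξ₂^{−2} − (1/(4m))ξ₁ξ₂^{−3}| ≤ C(1 + ξ₁²)ξ₂^{−4}. -/
/-- Quantitative low–high asymptotic expansion of `1/Δ`:
`1/Δ = −(1/(4m))ξ₂^{−2}(1 − ξ₁/ξ₂ + O((1 + ξ₁²)ξ₂^{−2}))` in the region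
`⟨ξ₁⟩ ≤ ⟨ξ₂⟩/20`, where `⟨ξ⟩ := (1 + ξ²)^{1/2}`. -/
theorem inv_delta_low_high_expansion (m : ℝ) (hm : 0 < m) :
    ∃ C > 0, ∀ ξ₁ ξ₂ : ℝ,
      Real.sqrt (1 + ξ₁^2) ≤ Real.sqrt (1 + ξ₂^2) / 20 →
      |1 / ((m - 2*ξ₁*ξ₂)^2 - 4*(ξ₁^2 + m)*(ξ₂^2 + m))
          + (1/(4*m)) * ξ₂^(-2 : ℤ) - (1/(4*m)) * ξ₁ * ξ₂^(-3 : ℤ)|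
        ≤ C * (1 + ξ₁^2) * ξ₂^(-4 : ℤ) := by
  refine ⟨(4*m + 6*m^2)/(12*m^2), by positivity, ?_⟩
  intro ξ₁ ξ₂ h
  have h1 : 0 ≤ 1 + ξ₁^2 := by positivity
  have h2 : 0 ≤ 1 + ξ₂^2 := by positivity
  have hsq : 400 * (1 + ξ₁^2) ≤ 1 + ξ₂^2 := by
    have := Real.sq_sqrt h1
    have := Real.sq_sqrt h2
    have hs1 : 0 ≤ Real.sqrt (1 + ξ₁^2) := Real.sqrt_nonneg _
    nlinarith [mul_self_le_mul_self hs1 h]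
  have hξ2sq : (399 : ℝ) ≤ ξ₂^2 := by nlinarith
  have hξ2 : ξ₂ ≠ 0 := by
    intro h0; rw [h0] at hξ2sq; norm_num at hξ2sq
  have hx12 : ξ₁^2 ≤ ξ₂^2 := by nlinarith
  have habs12 : |ξ₁| ≤ |ξ₂| := by
    rw [← Real.sqrt_sq_eq_abs, ← Real.sqrt_sq_eq_abs]
    exact Real.sqrt_le_sqrt hx12
  have habs2pos : 0 < |ξ₂| := abs_pos.mpr hξ2
  set Δ : ℝ := (m - 2*ξ₁*ξ₂)^2 - 4*(ξ₁^2 + m)*(ξ₂^2 + m) with hΔdef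
  have hΔ : Δ = -(4*m*(ξ₁^2 + ξ₂^2 + ξ₁*ξ₂) + 3*m^2) := by rw [hΔdef]; ring
  have hquad : (3/4 : ℝ) * ξ₂^2 ≤ ξ₁^2 + ξ₂^2 + ξ₁*ξ₂ := by
    nlinarith [sq_nonneg (ξ₁ + ξ₂/2)]
  have hΔneg : Δ < 0 := by rw [hΔ]; nlinarith
  have hΔne : Δ ≠ 0 := ne_of_lt hΔneg
  have hΔabs : 3*m*ξ₂^2 ≤ |Δ| := by
    rw [abs_of_neg hΔneg, hΔ]; nlinarith
  have h2' : ξ₂^(-2 : ℤ) = (ξ₂^2)⁻¹ := by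
    rw [show (-2 : ℤ) = -(2:ℕ) by norm_num, zpow_neg, zpow_natCast]
  have h3' : ξ₂^(-3 : ℤ) = (ξ₂^3)⁻¹ := by
    rw [show (-3 : ℤ) = -(3:ℕ) by norm_num, zpow_neg, zpow_natCast]
  have h4' : ξ₂^(-4 : ℤ) = (ξ₂^4)⁻¹ := by
    rw [show (-4 : ℤ) = -(4:ℕ) by norm_num, zpow_neg, zpow_natCast]
  -- exact algebraic identity
  have key : 1 / Δ + (1/(4*m)) * ξ₂^(-2 : ℤ) - (1/(4*m)) * ξ₁ * ξ₂^(-3 : ℤ)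
      = (4*m*ξ₁^3 + 3*m^2*(ξ₁ - ξ₂)) / (4*m*ξ₂^3*Δ) := by
    rw [h2', h3']
    field_simp
    rw [hΔ]
    ring
  rw [key, abs_div]
  -- numerator bound
  have e1 : ξ₁ ≤ |ξ₁| := le_abs_self _
  have e2 : -|ξ₁| ≤ ξ₁ := neg_abs_le _
  have e3 : ξ₂ ≤ |ξ₂| := le_abs_self _
  have e4 : -|ξ₂| ≤ ξ₂ := neg_abs_le _
  have e5 : ξ₁^3 ≤ |ξ₁|^3 := by rw [← abs_pow]; exact le_abs_self _
  have e6 : -(|ξ₁|^3) ≤ ξ₁^3 := by rw [← abs_pow]; exact neg_abs_le _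
  have hcube : |ξ₁|^3 = ξ₁^2 * |ξ₁| := by
    rw [pow_succ, sq_abs]
  have hone : (1:ℝ) ≤ 1 + ξ₁^2 := by nlinarith [sq_nonneg ξ₁]
  have hx2le : |ξ₂| ≤ (1 + ξ₁^2) * |ξ₂| := le_mul_of_one_le_left (abs_nonneg ξ₂) hone
  have hx1le : |ξ₁| ≤ (1 + ξ₁^2) * |ξ₂| := habs12.trans hx2le
  have hx1cube : |ξ₁|^3 ≤ (1 + ξ₁^2) * |ξ₂| := by
    rw [hcube]
    calc ξ₁^2 * |ξ₁| ≤ ξ₁^2 * |ξ₂| :=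
          mul_le_mul_of_nonneg_left habs12 (sq_nonneg ξ₁)
      _ ≤ (1 + ξ₁^2) * |ξ₂| :=
          mul_le_mul_of_nonneg_right (by linarith) (abs_nonneg ξ₂)
  have hnum : |4*m*ξ₁^3 + 3*m^2*(ξ₁ - ξ₂)| ≤ (4*m + 6*m^2) * (1 + ξ₁^2) * |ξ₂| := by
    rw [abs_le]
    constructor
    · linarith [mul_le_mul_of_nonneg_left hx1cube (le_of_lt hm),
        mul_le_mul_of_nonneg_left hx1le (sq_nonneg m),
        mul_le_mul_of_nonneg_left hx2le (sq_nonneg m),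
        mul_le_mul_of_nonneg_left e6 (le_of_lt hm),
        mul_le_mul_of_nonneg_left e2 (sq_nonneg m),
        mul_le_mul_of_nonneg_left e3 (sq_nonneg m)]
    · linarith [mul_le_mul_of_nonneg_left hx1cube (le_of_lt hm),
        mul_le_mul_of_nonneg_left hx1le (sq_nonneg m),
        mul_le_mul_of_nonneg_left hx2le (sq_nonneg m),
        mul_le_mul_of_nonneg_left e5 (le_of_lt hm),
        mul_le_mul_of_nonneg_left e1 (sq_nonneg m),
        mul_le_mul_of_nonneg_left e4 (sq_nonneg m)]
  -- denominator bound
  have h4m : |4*m*ξ₂^3*Δ| = 4*m*ξ₂^2* |ξ₂| * |Δ| := by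
    rw [abs_mul (4*m*ξ₂^3) Δ, abs_mul (4*m) (ξ₂^3),
      abs_of_pos (show (0:ℝ) < 4*m by positivity), abs_pow,
      show |ξ₂|^3 = ξ₂^2 * |ξ₂| by rw [pow_succ, sq_abs]]
    ring
  have hden : 12*m^2 * ξ₂^4 * |ξ₂| ≤ |4*m*ξ₂^3*Δ| := by
    rw [h4m]
    have hpos : (0:ℝ) ≤ 4*m*ξ₂^2* |ξ₂| := by positivity
    have h5 := mul_le_mul_of_nonneg_left hΔabs hpos
    calc 12*m^2 * ξ₂^4 * |ξ₂| = 4*m*ξ₂^2* |ξ₂| * (3*m*ξ₂^2) := by ring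
      _ ≤ 4*m*ξ₂^2* |ξ₂| * |Δ| := h5
  have hC : ((4*m + 6*m^2) * (1 + ξ₁^2) * |ξ₂|) / (12*m^2 * ξ₂^4 * |ξ₂|)
      = (4*m + 6*m^2)/(12*m^2) * (1 + ξ₁^2) * ξ₂^(-4 : ℤ) := by
    rw [h4']
    rw [div_eq_iff (by positivity : 12*m^2*ξ₂^4* |ξ₂| ≠ 0)]
    field_simp
  calc |4*m*ξ₁^3 + 3*m^2*(ξ₁ - ξ₂)| / |4*m*ξ₂^3*Δ|
      ≤ ((4*m + 6*m^2) * (1 + ξ₁^2) * |ξ₂|) / (12*m^2 * ξ₂^4 * |ξ₂|) := by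
        apply div_le_div₀ (by positivity) hnum (by positivity) hden
    _ = (4*m + 6*m^2)/(12*m^2) * (1 + ξ₁^2) * ξ₂^(-4 : ℤ) := hC
end

section
/- With the quadratic symbols q₀₀, q₁₁ and the symbol a := [(m − 2ξ₁ξ₂)q₁₁ + 2(ξ₁² + m)(ξ₂² + m)q₀₀]/Δ, define a₀(ξ) := −(i/2)g⁰¹_{uₜ} − (g¹¹_u/(4m))ξ − (i/(2m))(g⁰¹_{uₜ} + g¹¹_{uₓ}/2)ξ² and a₁(ξ) := g¹¹_u/8 − f_{uₜuₜ}/2 + (i/8)g¹¹_{uₓ}ξ + (ξ²/(4m))(g¹¹_u − 2f_{uₜuₜ}). Then there exists C > 0 such that for all real ξ₁, ξ₂ with ⟨ξ₁⟩ ≤ ⟨ξ₂⟩/20 one has |a(ξ₁,ξ₂) − a₀(ξ₁)ξ₂ − a₁(ξ₁)| ≤ C(1 + ξ₁⁴)/|ξ₂|, where ⟨ξ⟩ := (1 + ξ²)^{1/2}. -/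
/-!
Multiplying by `4mΔ`, which is quadratic in `ξ₂`, turns `a - a₀ ξ₂ - a₁` into a polynomial of
degree three in `ξ₂`; `a₀` and `a₁` are exactly the coefficients that cancel its `ξ₂³` and `ξ₂²`
terms, leaving `ξ₂ P₁(ξ₁) + P₀(ξ₁)` with explicit quartics `P₁`, `P₀`. Since
`Δ = -4m(ξ₁² + ξ₂² + ξ₁ξ₂) - 3m²` has `|Δ| ≥ 3mξ₂²` and the low–high condition forces `|ξ₂| ≥ 1`,
the remainder is `O((1 + ξ₁⁴)/|ξ₂|)`.
-/

open Complex

/-- The quadratic symbol `q₀₀(ξ₁,ξ₂) = f_{uₜuₜ} + i g⁰¹_{uₜ}(ξ₁+ξ₂)`. -/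
noncomputable def q00 (futut g01ut : ℝ) (ξ₁ ξ₂ : ℝ) : ℂ :=
  (futut : ℂ) + Complex.I * g01ut * ((ξ₁ : ℂ) + ξ₂)

/-- The quadratic symbol
`q₁₁(ξ₁,ξ₂) = f_{uu} − (g¹¹_u/2)(ξ₁² + ξ₂²) − (i g¹¹_{uₓ}/2)(ξ₁ξ₂² + ξ₂ξ₁²)`. -/
noncomputable def q11 (fuu g11u g11ux : ℝ) (ξ₁ ξ₂ : ℝ) : ℂ :=
  (fuu : ℂ) - (g11u : ℂ)/2 * ((ξ₁ : ℂ)^2 + (ξ₂ : ℂ)^2)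
    - Complex.I * g11ux / 2 * ((ξ₁ : ℂ) * (ξ₂ : ℂ)^2 + (ξ₂ : ℂ) * (ξ₁ : ℂ)^2)

/-- The denominator `Δ(ξ₁,ξ₂) = (m − 2ξ₁ξ₂)² − 4(ξ₁² + m)(ξ₂² + m)` as a
complex number. -/
noncomputable def Δc (m ξ₁ ξ₂ : ℝ) : ℂ :=
  ((m : ℂ) - 2*ξ₁*ξ₂)^2 - 4*((ξ₁ : ℂ)^2 + m)*((ξ₂ : ℂ)^2 + m)

/-- The normal form symbol `a = [(m − 2ξ₁ξ₂)q₁₁ + 2(ξ₁² + m)(ξ₂² + m)q₀₀]/Δ`. -/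
noncomputable def aSym (m fuu futut g01ut g11u g11ux : ℝ) (ξ₁ ξ₂ : ℝ) : ℂ :=
  (((m : ℂ) - 2*ξ₁*ξ₂) * q11 fuu g11u g11ux ξ₁ ξ₂
    + 2*((ξ₁ : ℂ)^2 + m)*((ξ₂ : ℂ)^2 + m) * q00 futut g01ut ξ₁ ξ₂) / Δc m ξ₁ ξ₂

/-- First low–high Taylor coefficient
`a₀(ξ) = −(i/2)g⁰¹_{uₜ} − (g¹¹_u/(4m))ξ − (i/(2m))(g⁰¹_{uₜ} + g¹¹_{uₓ}/2)ξ²`. -/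
noncomputable def a0 (m g01ut g11u g11ux : ℝ) (ξ : ℝ) : ℂ :=
  -(Complex.I/2) * g01ut - (g11u : ℂ)/(4*m) * ξ
    - Complex.I/(2*m) * ((g01ut : ℂ) + (g11ux : ℂ)/2) * (ξ : ℂ)^2

/-- Second low–high Taylor coefficient
`a₁(ξ) = g¹¹_u/8 − f_{uₜuₜ}/2 + (i/8)g¹¹_{uₓ}ξ + (ξ²/(4m))(g¹¹_u − 2f_{uₜuₜ})`. -/
noncomputable def a1 (m futut g11u g11ux : ℝ) (ξ : ℝ) : ℂ :=
  (g11u : ℂ)/8 - (futut : ℂ)/2 + Complex.I/8 * g11ux * ξ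
    + (ξ : ℂ)^2/(4*m) * ((g11u : ℂ) - 2*futut)

lemma pow_le_one_add_pow {x : ℝ} (hx : 0 ≤ x) {k N : ℕ} (hk : k ≤ N) : x ^ k ≤ 1 + x ^ N := by
  rcases le_total x 1 with hx1 | hx1
  · linarith [pow_le_one₀ hx hx1 (n := k), pow_nonneg hx N]
  · linarith [pow_le_pow_right₀ hx1 hk]

lemma norm_sum_mul_pow_le {𝕜 : Type*} [NormedField 𝕜] {N : ℕ} (c : Fin (N + 1) → 𝕜) (s : 𝕜) :
    ‖∑ k, c k * s ^ (k : ℕ)‖ ≤ (∑ k, ‖c k‖) * (1 + ‖s‖ ^ N) := by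
  rw [Finset.sum_mul]
  refine (norm_sum_le _ _).trans (Finset.sum_le_sum fun k _ => ?_)
  rw [norm_mul, norm_pow]
  exact mul_le_mul_of_nonneg_left
    (pow_le_one_add_pow (norm_nonneg s) (Nat.lt_succ_iff.mp k.isLt)) (norm_nonneg _)

lemma Δc_eq_ofReal (m ξ₁ ξ₂ : ℝ) :
    Δc m ξ₁ ξ₂ = ((-(4 * m * (ξ₁ ^ 2 + ξ₂ ^ 2 + ξ₁ * ξ₂) + 3 * m ^ 2) : ℝ) : ℂ) := by
  rw [Δc]; push_cast; ring

lemma mul_sq_le_norm_Δc {m : ℝ} (hm : 0 < m) (ξ₁ ξ₂ : ℝ) : 3 * m * ξ₂ ^ 2 ≤ ‖Δc m ξ₁ ξ₂‖ := by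
  have hquad : 3 / 4 * ξ₂ ^ 2 ≤ ξ₁ ^ 2 + ξ₂ ^ 2 + ξ₁ * ξ₂ := by nlinarith [sq_nonneg (ξ₁ + ξ₂ / 2)]
  rw [Δc_eq_ofReal, Complex.norm_real, norm_neg, Real.norm_of_nonneg (by nlinarith)]
  nlinarith

lemma Δc_ne_zero {m : ℝ} (hm : 0 < m) (ξ₁ ξ₂ : ℝ) : Δc m ξ₁ ξ₂ ≠ 0 := by
  rw [Δc_eq_ofReal, Complex.ofReal_ne_zero, neg_ne_zero]
  nlinarith [sq_nonneg (ξ₁ + ξ₂ / 2), sq_nonneg ξ₂]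

lemma one_le_abs_of_sqrt_le {x y : ℝ} (h : √(1 + x ^ 2) ≤ √(1 + y ^ 2) / 20) : 1 ≤ |y| := by
  have h20 : 20 ≤ √(1 + y ^ 2) := by
    linarith [Real.one_le_sqrt.mpr (le_add_of_nonneg_right (sq_nonneg x))]
  have h400 : 400 ≤ 1 + y ^ 2 := by
    nlinarith [Real.sq_sqrt (show 0 ≤ 1 + y ^ 2 by positivity)]
  exact one_le_sq_iff_one_le_abs y |>.mp (by linarith)

-- Coefficients of the quartics in `4mΔ (a - a₀ ξ₂ - a₁) = ξ₂ P₁(ξ₁) + P₀(ξ₁)`.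
noncomputable def aSymRemainderCoeff₁ (m fuu futut g01ut g11u g11ux : ℝ) : Fin 5 → ℂ :=
  ![2 * m ^ 3 * g01ut * I,
    -8 * m * fuu - m ^ 2 * g11u - 8 * m ^ 2 * futut,
    (-3 * m ^ 2 * g11ux - 6 * m ^ 2 * g01ut) * I,
    4 * m * g11u - 8 * m * futut,
    (-4 * m * g11ux - 8 * m * g01ut) * I]

noncomputable def aSymRemainderCoeff₀ (m fuu futut g01ut g11u g11ux : ℝ) : Fin 5 → ℂ :=
  ![4 * m ^ 2 * fuu + 3 / 2 * m ^ 3 * g11u + 2 * m ^ 3 * futut,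
    (3 / 2 * m ^ 3 * g11ux + 8 * m ^ 3 * g01ut) * I,
    3 * m ^ 2 * g11u - 6 * m ^ 2 * futut,
    (2 * m ^ 2 * g11ux + 8 * m ^ 2 * g01ut) * I,
    4 * m * g11u - 8 * m * futut]

lemma aSym_sub_expansion_eq {m : ℝ} (hm : 0 < m) (fuu futut g01ut g11u g11ux ξ₁ ξ₂ : ℝ) :
    aSym m fuu futut g01ut g11u g11ux ξ₁ ξ₂
        - a0 m g01ut g11u g11ux ξ₁ * ξ₂ - a1 m futut g11u g11ux ξ₁
      = (ξ₂ * ∑ k, aSymRemainderCoeff₁ m fuu futut g01ut g11u g11ux k * (ξ₁ : ℂ) ^ (k : ℕ)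
          + ∑ k, aSymRemainderCoeff₀ m fuu futut g01ut g11u g11ux k * (ξ₁ : ℂ) ^ (k : ℕ))
        / (4 * m * Δc m ξ₁ ξ₂) := by
  have hm' : (m : ℂ) ≠ 0 := Complex.ofReal_ne_zero.mpr hm.ne'
  have hΔ := Δc_ne_zero hm ξ₁ ξ₂
  have hcancel (X : ℂ) : X / Δc m ξ₁ ξ₂ * (4 * m * Δc m ξ₁ ξ₂) = 4 * m * X := by field_simp
  rw [eq_div_iff (by simp [hm', hΔ]), sub_mul, sub_mul, aSym, hcancel]
  simp only [aSymRemainderCoeff₁, aSymRemainderCoeff₀, a0, a1, q00, q11, Δc, Fin.sum_univ_five,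
    Matrix.cons_val, Fin.coe_ofNat_eq_mod, Nat.reduceMod]
  field_simp
  ring

lemma norm_mul_add_div_le {t c : ℝ} (ht : 1 ≤ |t|) (hc : 0 < c) {p q D : ℂ}
    (hD : c * t ^ 2 ≤ ‖D‖) : ‖(t * p + q) / D‖ ≤ (‖p‖ + ‖q‖) / (c * |t|) := by
  have hnum : ‖t * p + q‖ ≤ (‖p‖ + ‖q‖) * |t| := by
    calc ‖t * p + q‖ ≤ |t| * ‖p‖ + ‖q‖ := by
          simpa [norm_mul, Complex.norm_real] using norm_add_le (t * p) q
      _ ≤ (‖p‖ + ‖q‖) * |t| := by nlinarith [norm_nonneg q]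
  have hden : c * |t| * |t| ≤ ‖D‖ := by rwa [mul_assoc, ← sq, sq_abs]
  rw [norm_div]
  calc ‖t * p + q‖ / ‖D‖ ≤ (‖p‖ + ‖q‖) * |t| / (c * |t| * |t|) := by gcongr
    _ = (‖p‖ + ‖q‖) / (c * |t|) := by
        rw [mul_div_mul_right _ _ (by positivity)]

theorem aSym_low_high_expansion_general (m fuu futut g01ut g11u g11ux : ℝ)
    (hm : 0 < m) :
    ∃ C > 0, ∀ ξ₁ ξ₂ : ℝ,
      Real.sqrt (1 + ξ₁^2) ≤ Real.sqrt (1 + ξ₂^2) / 20 →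
      ‖aSym m fuu futut g01ut g11u g11ux ξ₁ ξ₂
          - a0 m g01ut g11u g11ux ξ₁ * ξ₂ - a1 m futut g11u g11ux ξ₁‖
        ≤ C * (1 + ξ₁^4) / |ξ₂| := by
  set c₁ := aSymRemainderCoeff₁ m fuu futut g01ut g11u g11ux
  set c₀ := aSymRemainderCoeff₀ m fuu futut g01ut g11u g11ux
  set S := ∑ k, ‖c₁ k‖ + ∑ k, ‖c₀ k‖
  refine ⟨S / (12 * m ^ 2) + 1, by positivity, fun ξ₁ ξ₂ hlh => ?_⟩
  have hξ₂ := one_le_abs_of_sqrt_le hlh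
  have hΔ : 12 * m ^ 2 * ξ₂ ^ 2 ≤ ‖4 * m * Δc m ξ₁ ξ₂‖ := by
    rw [norm_mul, norm_mul, Complex.norm_ofNat, Complex.norm_real, Real.norm_of_nonneg hm.le]
    nlinarith [mul_sq_le_norm_Δc hm ξ₁ ξ₂]
  have hξ₁ : ‖(ξ₁ : ℂ)‖ ^ 4 = ξ₁ ^ 4 := by simpa using Even.pow_abs (by decide : Even 4) ξ₁
  have h₁ := norm_sum_mul_pow_le c₁ (ξ₁ : ℂ)
  have h₀ := norm_sum_mul_pow_le c₀ (ξ₁ : ℂ)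
  rw [hξ₁] at h₁ h₀
  rw [aSym_sub_expansion_eq hm]
  calc _ ≤ _ := norm_mul_add_div_le hξ₂ (by positivity) hΔ
    _ ≤ S * (1 + ξ₁ ^ 4) / (12 * m ^ 2 * |ξ₂|) := by gcongr; linarith
    _ = S / (12 * m ^ 2) * (1 + ξ₁ ^ 4) / |ξ₂| := by ring
    _ ≤ (S / (12 * m ^ 2) + 1) * (1 + ξ₁ ^ 4) / |ξ₂| := by gcongr; linarith

/-- Low–high symbol expansion of the normal form correction `A`:
`|a(ξ₁,ξ₂) − a₀(ξ₁)ξ₂ − a₁(ξ₁)| ≤ C(1 + ξ₁⁴)/|ξ₂|` for `⟨ξ₁⟩ ≤ ⟨ξ₂⟩/20`. -/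
theorem aSym_low_high_expansion (m fuu futut futu g01u g01ut g01ux g11u g11ut g11ux : ℝ)
    (hm : 0 < m) :
    ∃ C > 0, ∀ ξ₁ ξ₂ : ℝ,
      Real.sqrt (1 + ξ₁^2) ≤ Real.sqrt (1 + ξ₂^2) / 20 →
      ‖aSym m fuu futut g01ut g11u g11ux ξ₁ ξ₂
          - a0 m g01ut g11u g11ux ξ₁ * ξ₂ - a1 m futut g11u g11ux ξ₁‖
        ≤ C * (1 + ξ₁^4) / |ξ₂| :=
  aSym_low_high_expansion_general m fuu futut g01ut g11u g11ux hm
end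

section
/- Define the numerator b^num(ξ₁,ξ₂) := 2q₁₁(ξ₁,ξ₂) + (m − 2ξ₁ξ₂)q₀₀(ξ₁,ξ₂). Then there exists a polynomial r(ξ₁,ξ₂) with complex coefficients of total degree at most 2 such that for all real ξ₁, ξ₂, b^num(ξ₁,ξ₂) = −i(g¹¹_{uₓ} + 2g⁰¹_{uₜ})·ξ₁ξ₂·(ξ₁ + ξ₂) + r(ξ₁,ξ₂). In particular the top-degree (degree three) homogeneous part of b^num is divisible by ξ₁ + ξ₂. -/
open Complex

/-- The numerator `b^num = 2q₁₁ + (m − 2ξ₁ξ₂)q₀₀`. -/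
noncomputable def bNum (m fuu futut g01ut g11u g11ux : ℝ) (ξ₁ ξ₂ : ℝ) : ℂ :=
  2 * q11 fuu g11u g11ux ξ₁ ξ₂ + ((m : ℂ) - 2*ξ₁*ξ₂) * q00 futut g01ut ξ₁ ξ₂

open MvPolynomial in
/-- High–high factorization of `b^num`: its degree-three homogeneous part is
`−i(g¹¹_{uₓ} + 2g⁰¹_{uₜ})·ξ₁ξ₂·(ξ₁ + ξ₂)`, which is divisible by `ξ₁ + ξ₂`;
the remainder is a polynomial of total degree at most 2. -/
theorem bNum_high_high_factorization (m fuu futut g01ut g11u g11ux : ℝ) (hm : 0 < m) :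
    ∃ r : MvPolynomial (Fin 2) ℂ, r.totalDegree ≤ 2 ∧
      ∀ ξ₁ ξ₂ : ℝ,
        bNum m fuu futut g01ut g11u g11ux ξ₁ ξ₂
          = -(Complex.I * ((g11ux : ℂ) + 2*g01ut)) * (ξ₁ : ℂ) * (ξ₂ : ℂ)
              * ((ξ₁ : ℂ) + ξ₂)
            + MvPolynomial.eval ![(ξ₁ : ℂ), (ξ₂ : ℂ)] r := by
  refine ⟨(C ((2*fuu + m*futut : ℝ) : ℂ) - C (g11u : ℂ) * (X 0 ^ 2 + X 1 ^ 2)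
      + C (Complex.I * (m : ℂ) * (g01ut : ℂ)) * (X 0 + X 1)
      - C ((2 * futut : ℝ) : ℂ) * (X 0 * X 1) : MvPolynomial (Fin 2) ℂ), ?_, ?_⟩
  · apply le_trans (totalDegree_sub _ _)
    apply max_le
    apply le_trans (totalDegree_add _ _)
    apply max_le
    · apply le_trans (totalDegree_sub _ _)
      apply max_le
      · exact le_trans (le_of_eq (MvPolynomial.totalDegree_C _)) (by norm_num)
      · apply le_trans (totalDegree_mul _ _)
        simp only [totalDegree_C, zero_add]
        apply le_trans (totalDegree_add _ _)
        apply max_le <;>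
          exact le_trans (totalDegree_pow _ _) (by simp [totalDegree_X])
    · apply le_trans (totalDegree_mul _ _)
      simp only [totalDegree_C, zero_add]
      apply le_trans (totalDegree_add _ _)
      exact max_le (by simp [totalDegree_X]) (by simp [totalDegree_X])
    · apply le_trans (totalDegree_mul _ _)
      simp only [totalDegree_C, zero_add]
      apply le_trans (totalDegree_mul _ _)
      simp [totalDegree_X]
  · intro ξ₁ ξ₂
    simp [bNum, q00, q11, Matrix.cons_val_zero, Matrix.cons_val_one]
    ring
end
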